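/- For every 0 < κ < 1, as u → 0⁺ one has θ_κ(u) = (Γ((κ+1)/2)/(2^{1−κ}Γ((3−κ)/2)))·u^{1−κ} − u²/(2(κ+1)) + o(u²); that is, the difference θ_κ(u) − (Γ((κ+1)/2)/(2^{1−κ}Γ((3−κ)/2)))·u^{1−κ} + u²/(2(κ+1)) is little-o of u² as u → 0⁺. (Asymptotic expansion (10) of Lemma 1.) -/
import Mathlib

open Real MeasureTheory Filter

/-- The function `θ_κ(u)` from Lemma 1. -/
noncomputable def theta (k u : ℝ) : ℝ :=
  Real.Gamma ((k+1)/2) *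
    ((2:ℝ)^(k-1) * u^(1-k) / Real.Gamma ((3-k)/2)
      + ∑' m : ℕ, (u/2) ^ (2*((m:ℝ)+1) - k + 1) /
          ((Nat.factorial (m+1)) * Real.Gamma (((m:ℝ)+1) + (3-k)/2))
      - ∑' m : ℕ, (u/2) ^ (2*((m:ℝ)+1)) /
          ((Nat.factorial (m+1)) * Real.Gamma (((m:ℝ)+1) + (k+1)/2)))

private lemma fact_mul_Gamma_le (a : ℝ) (ha : 1 ≤ a) (n : ℕ) :
    (n.factorial : ℝ) * Real.Gamma a ≤ Real.Gamma ((n : ℝ) + a) := by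
  induction n with
  | zero => simp
  | succ n ih =>
    have hn0 : (0:ℝ) ≤ (n:ℝ) := Nat.cast_nonneg n
    have hpos : (0:ℝ) < (n:ℝ) + a := by linarith
    have hG : Real.Gamma (((n+1 : ℕ) : ℝ) + a) = ((n:ℝ) + a) * Real.Gamma ((n:ℝ) + a) := by
      push_cast
      rw [show (n:ℝ) + 1 + a = ((n:ℝ) + a) + 1 by ring, Real.Gamma_add_one hpos.ne']
    have hGpos : 0 ≤ Real.Gamma ((n:ℝ) + a) := (Real.Gamma_pos_of_pos hpos).le
    have h1 : (((n+1:ℕ)).factorial : ℝ) * Real.Gamma a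
        = ((n:ℝ)+1) * ((n.factorial:ℝ) * Real.Gamma a) := by
      push_cast [Nat.factorial_succ]; ring
    rw [h1, hG]
    calc ((n:ℝ)+1) * ((n.factorial:ℝ) * Real.Gamma a)
        ≤ ((n:ℝ)+1) * Real.Gamma ((n:ℝ)+a) :=
          mul_le_mul_of_nonneg_left ih (by positivity)
      _ ≤ ((n:ℝ)+a) * Real.Gamma ((n:ℝ)+a) :=
          mul_le_mul_of_nonneg_right (by linarith) hGpos

private lemma fact_mul_Gamma_le' (a : ℝ) (ha : 1 ≤ a) (m j : ℕ) :
    (m.factorial : ℝ) * Real.Gamma a ≤ ((m+j).factorial : ℝ) * Real.Gamma ((m:ℝ) + a) := by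
  have hΓpos : 0 < Real.Gamma ((m:ℝ) + a) :=
    Real.Gamma_pos_of_pos (by have := Nat.cast_nonneg (α := ℝ) m; linarith)
  calc (m.factorial : ℝ) * Real.Gamma a ≤ Real.Gamma ((m:ℝ) + a) := fact_mul_Gamma_le a ha m
    _ ≤ ((m+j).factorial : ℝ) * Real.Gamma ((m:ℝ) + a) :=
        le_mul_of_one_le_left hΓpos.le (by exact_mod_cast (m+j).factorial_pos)

private lemma aux_term_le (a e x : ℝ) (ha : 1 ≤ a) (hx : 0 < x) (hx1 : x ≤ 1/2)
    (d : ℕ → ℝ) (hd : ∀ m, (m.factorial : ℝ) * Real.Gamma a ≤ d m) (m : ℕ) :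
    x ^ (2*(m:ℝ) + e) / d m ≤ (x ^ e / Real.Gamma a) * (1/4) ^ m := by
  have hGa : 0 < Real.Gamma a := Real.Gamma_pos_of_pos (by linarith)
  have hfact : (1:ℝ) ≤ (m.factorial : ℝ) := by exact_mod_cast m.factorial_pos
  have hdpos : 0 < d m := lt_of_lt_of_le (by nlinarith) (hd m)
  have hnum : x ^ (2*(m:ℝ) + e) = (x^2)^m * x ^ e := by
    rw [Real.rpow_add hx, ← Real.rpow_natCast (x^2) m, ← Real.rpow_natCast x 2,
      ← Real.rpow_mul hx.le]
    ring_nf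
  have hx2 : (x^2)^m ≤ (1/4:ℝ)^m := by
    apply pow_le_pow_left₀ (by positivity)
    nlinarith
  have h1 : x ^ (2*(m:ℝ) + e) / d m ≤ x ^ (2*(m:ℝ) + e) / ((m.factorial : ℝ) * Real.Gamma a) := by
    apply div_le_div_of_nonneg_left (by positivity) (by positivity) (hd m)
  refine h1.trans ?_
  rw [hnum]
  have hxe : 0 ≤ x ^ e := (Real.rpow_pos_of_pos hx e).le
  calc (x^2)^m * x ^ e / ((m.factorial : ℝ) * Real.Gamma a)
      ≤ (1/4:ℝ)^m * x ^ e / (1 * Real.Gamma a) := by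
        apply div_le_div₀ (by positivity) (mul_le_mul_of_nonneg_right hx2 hxe)
          (by positivity) (mul_le_mul_of_nonneg_right hfact hGa.le)
    _ = (x ^ e / Real.Gamma a) * (1/4) ^ m := by ring

private lemma aux_term_nonneg (a e x : ℝ) (ha : 1 ≤ a) (hx : 0 < x)
    (d : ℕ → ℝ) (hd : ∀ m, (m.factorial : ℝ) * Real.Gamma a ≤ d m) (m : ℕ) :
    0 ≤ x ^ (2*(m:ℝ) + e) / d m := by
  have hGa : 0 < Real.Gamma a := Real.Gamma_pos_of_pos (by linarith)
  have hfact : (1:ℝ) ≤ (m.factorial : ℝ) := by exact_mod_cast m.factorial_pos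
  have hdpos : 0 < d m := lt_of_lt_of_le (by nlinarith) (hd m)
  positivity

private lemma aux_summable (a e x : ℝ) (ha : 1 ≤ a) (hx : 0 < x) (hx1 : x ≤ 1/2)
    (d : ℕ → ℝ) (hd : ∀ m, (m.factorial : ℝ) * Real.Gamma a ≤ d m) :
    Summable (fun m : ℕ => x ^ (2*(m:ℝ) + e) / d m) :=
  Summable.of_nonneg_of_le (aux_term_nonneg a e x ha hx d hd)
    (aux_term_le a e x ha hx hx1 d hd)
    ((summable_geometric_of_lt_one (by norm_num) (by norm_num)).mul_left _)

private lemma aux_tsum_le (a e x : ℝ) (ha : 1 ≤ a) (hx : 0 < x) (hx1 : x ≤ 1/2)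
    (d : ℕ → ℝ) (hd : ∀ m, (m.factorial : ℝ) * Real.Gamma a ≤ d m) :
    ∑' m : ℕ, x ^ (2*(m:ℝ) + e) / d m ≤ (x ^ e / Real.Gamma a) * (4/3) := by
  have h := Summable.tsum_le_tsum (aux_term_le a e x ha hx hx1 d hd)
    (aux_summable a e x ha hx hx1 d hd)
    ((summable_geometric_of_lt_one (by norm_num) (by norm_num)).mul_left _)
  refine h.trans_eq ?_
  rw [tsum_mul_left, tsum_geometric_of_lt_one (by norm_num) (by norm_num)]
  norm_num

theorem lemma1_theta_asymptotics (k : ℝ) (hk0 : 0 < k) (hk1 : k < 1) :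
    (fun u : ℝ => theta k u
        - (Real.Gamma ((k+1)/2) / ((2:ℝ)^(1-k) * Real.Gamma ((3-k)/2))) * u ^ (1-k)
        + u ^ 2 / (2 * (k + 1)))
      =o[nhdsWithin 0 (Set.Ioi 0)] (fun u : ℝ => u ^ 2) := by
  have hΓkpos : 0 < Real.Gamma ((k+1)/2) := Real.Gamma_pos_of_pos (by linarith)
  set Γk := Real.Gamma ((k+1)/2) with hΓk
  set a1 : ℝ := 1 + (3-k)/2 with ha1def
  set a2 : ℝ := 1 + (k+1)/2 with ha2def
  set a3 : ℝ := 2 + (k+1)/2 with ha3def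
  have ha1 : 1 ≤ a1 := by rw [ha1def]; linarith
  have ha2 : 1 ≤ a2 := by rw [ha2def]; linarith
  have ha3 : 1 ≤ a3 := by rw [ha3def]; linarith
  have hΓ1 : 0 < Real.Gamma a1 := Real.Gamma_pos_of_pos (by linarith)
  have hΓ3 : 0 < Real.Gamma a3 := Real.Gamma_pos_of_pos (by linarith)
  set C : ℝ := Γk * ((4/3) / Real.Gamma a1 + (4/3) / Real.Gamma a3) with hC
  have hCpos : 0 ≤ C := by positivity
  -- Key eventual bound
  have hbound : ∀ u ∈ Set.Ioo (0:ℝ) 1,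
      |theta k u - (Γk / ((2:ℝ)^(1-k) * Real.Gamma ((3-k)/2))) * u ^ (1-k)
        + u ^ 2 / (2 * (k + 1))| ≤ C * u ^ ((3:ℝ)-k) := by
    intro u hu
    obtain ⟨hu0, hu1⟩ := hu
    set x : ℝ := u/2 with hxdef
    have hx0 : 0 < x := by positivity
    have hx12 : x ≤ 1/2 := by rw [hxdef]; linarith
    set d1 : ℕ → ℝ := fun m => (Nat.factorial (m+1)) * Real.Gamma (((m:ℝ)+1) + (3-k)/2) with hd1
    set d2 : ℕ → ℝ := fun m => (Nat.factorial (m+1)) * Real.Gamma (((m:ℝ)+1) + (k+1)/2) with hd2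
    set d3 : ℕ → ℝ := fun m => (Nat.factorial (m+2)) * Real.Gamma (((m:ℝ)+2) + (k+1)/2) with hd3
    have hd1h : ∀ m, (m.factorial : ℝ) * Real.Gamma a1 ≤ d1 m := by
      intro m
      have h := fact_mul_Gamma_le' a1 ha1 m 1
      rw [show (m:ℝ) + a1 = ((m:ℝ)+1) + (3-k)/2 by rw [ha1def]; ring] at h
      exact h
    have hd2h : ∀ m, (m.factorial : ℝ) * Real.Gamma a2 ≤ d2 m := by
      intro m
      have h := fact_mul_Gamma_le' a2 ha2 m 1
      rw [show (m:ℝ) + a2 = ((m:ℝ)+1) + (k+1)/2 by rw [ha2def]; ring] at h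
      exact h
    have hd3h : ∀ m, (m.factorial : ℝ) * Real.Gamma a3 ≤ d3 m := by
      intro m
      have h := fact_mul_Gamma_le' a3 ha3 m 2
      rw [show (m:ℝ) + a3 = ((m:ℝ)+2) + (k+1)/2 by rw [ha3def]; ring] at h
      exact h
    -- rewrite the two series
    have hS1 : (∑' m : ℕ, (u/2) ^ (2*((m:ℝ)+1) - k + 1) /
          ((Nat.factorial (m+1)) * Real.Gamma (((m:ℝ)+1) + (3-k)/2)))
        = ∑' m : ℕ, x ^ (2*(m:ℝ) + (3-k)) / d1 m := by
      refine tsum_congr fun m => ?_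
      rw [show 2*((m:ℝ)+1) - k + 1 = 2*(m:ℝ) + (3-k) by ring]
    have hg : (∑' m : ℕ, (u/2) ^ (2*((m:ℝ)+1)) /
          ((Nat.factorial (m+1)) * Real.Gamma (((m:ℝ)+1) + (k+1)/2)))
        = ∑' m : ℕ, x ^ (2*(m:ℝ) + 2) / d2 m := by
      refine tsum_congr fun m => ?_
      rw [show 2*((m:ℝ)+1) = 2*(m:ℝ) + 2 by ring]
    have hgsum : Summable (fun m : ℕ => x ^ (2*(m:ℝ) + 2) / d2 m) :=
      aux_summable a2 2 x ha2 hx0 hx12 d2 hd2h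
    have hsplit : (∑' m : ℕ, x ^ (2*(m:ℝ) + 2) / d2 m)
        = x ^ ((2:ℝ)) / d2 0 + ∑' n : ℕ, x ^ (2*(n:ℝ) + 4) / d3 n := by
      rw [Summable.tsum_eq_zero_add hgsum]
      congr 1
      · norm_num
      · refine tsum_congr fun n => ?_
        have h1 : 2*((↑(n+1):ℝ)) + 2 = 2*(n:ℝ) + 4 := by push_cast; ring
        have h2 : d2 (n+1) = d3 n := by
          simp only [hd2, hd3]
          congr 2
          push_cast; ring
        rw [h1, h2]
    -- compute the first term of the second series
    have hd20 : d2 0 = ((k+1)/2) * Γk := by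
      rw [hd2]
      simp only [Nat.cast_zero, zero_add, Nat.factorial_one, Nat.cast_one, one_mul]
      rw [show (1:ℝ) + (k+1)/2 = (k+1)/2 + 1 by ring,
        Real.Gamma_add_one (by positivity : ((k:ℝ)+1)/2 ≠ 0)]
    have hx2u : x ^ ((2:ℝ)) = u^2 / 4 := by
      rw [show ((2:ℝ)) = ((2:ℕ):ℝ) by norm_num, Real.rpow_natCast, hxdef]
      ring
    have hfirst : Γk * (x ^ ((2:ℝ)) / d2 0) = u^2 / (2*(k+1)) := by
      rw [hd20, hx2u]
      field_simp
      ring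
    -- the power-of-2 prefactor
    have h2pow : (2:ℝ)^(k-1) = ((2:ℝ)^(1-k))⁻¹ := by
      rw [show k-1 = -(1-k) by ring, Real.rpow_neg (by norm_num : (0:ℝ) ≤ 2)]
    have h2powpos : (0:ℝ) < (2:ℝ)^(1-k) := Real.rpow_pos_of_pos (by norm_num) _
    have hΓ32 : 0 < Real.Gamma ((3-k)/2) := Real.Gamma_pos_of_pos (by linarith)
    have hA : Γk * ((2:ℝ)^(k-1) * u^(1-k) / Real.Gamma ((3-k)/2))
        = (Γk / ((2:ℝ)^(1-k) * Real.Gamma ((3-k)/2))) * u ^ (1-k) := by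
      rw [h2pow]
      field_simp
    -- the reduced expression
    have hred : theta k u - (Γk / ((2:ℝ)^(1-k) * Real.Gamma ((3-k)/2))) * u ^ (1-k)
          + u ^ 2 / (2 * (k + 1))
        = Γk * (∑' m : ℕ, x ^ (2*(m:ℝ) + (3-k)) / d1 m)
          - Γk * (∑' n : ℕ, x ^ (2*(n:ℝ) + 4) / d3 n) := by
      rw [theta, ← hΓk, hS1, hg, hsplit]
      have hexp : Γk * ((2:ℝ)^(k-1) * u^(1-k) / Real.Gamma ((3-k)/2)
            + (∑' m : ℕ, x ^ (2*(m:ℝ) + (3-k)) / d1 m)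
            - (x ^ ((2:ℝ)) / d2 0 + ∑' n : ℕ, x ^ (2*(n:ℝ) + 4) / d3 n))
          = Γk * ((2:ℝ)^(k-1) * u^(1-k) / Real.Gamma ((3-k)/2))
            + Γk * (∑' m : ℕ, x ^ (2*(m:ℝ) + (3-k)) / d1 m)
            - Γk * (x ^ ((2:ℝ)) / d2 0)
            - Γk * (∑' n : ℕ, x ^ (2*(n:ℝ) + 4) / d3 n) := by ring
      rw [hexp]
      linear_combination hA - hfirst
    rw [hred]
    -- bounds on the two series
    have hT1le := aux_tsum_le a1 (3-k) x ha1 hx0 hx12 d1 hd1h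
    have hT3le := aux_tsum_le a3 4 x ha3 hx0 hx12 d3 hd3h
    have hT1nn : 0 ≤ ∑' m : ℕ, x ^ (2*(m:ℝ) + (3-k)) / d1 m :=
      tsum_nonneg (aux_term_nonneg a1 (3-k) x ha1 hx0 d1 hd1h)
    have hT3nn : 0 ≤ ∑' n : ℕ, x ^ (2*(n:ℝ) + 4) / d3 n :=
      tsum_nonneg (aux_term_nonneg a3 4 x ha3 hx0 d3 hd3h)
    have hx1 : x ≤ 1 := by linarith
    have hxle : x ^ ((4:ℝ)) ≤ x ^ ((3:ℝ)-k) :=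
      Real.rpow_le_rpow_of_exponent_ge hx0 hx1 (by linarith)
    have hxu : x ^ ((3:ℝ)-k) ≤ u ^ ((3:ℝ)-k) :=
      Real.rpow_le_rpow hx0.le (by rw [hxdef]; linarith) (by linarith)
    have habs : |Γk * (∑' m : ℕ, x ^ (2*(m:ℝ) + (3-k)) / d1 m)
          - Γk * (∑' n : ℕ, x ^ (2*(n:ℝ) + 4) / d3 n)|
        ≤ Γk * (∑' m : ℕ, x ^ (2*(m:ℝ) + (3-k)) / d1 m)
          + Γk * (∑' n : ℕ, x ^ (2*(n:ℝ) + 4) / d3 n) := by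
      rw [abs_sub_comm]
      refine (abs_sub _ _).trans ?_
      rw [abs_of_nonneg (by positivity), abs_of_nonneg (by positivity)]
      linarith
    refine habs.trans ?_
    have hxpos : 0 < x ^ ((3:ℝ)-k) := Real.rpow_pos_of_pos hx0 _
    calc Γk * (∑' m : ℕ, x ^ (2*(m:ℝ) + (3-k)) / d1 m)
          + Γk * (∑' n : ℕ, x ^ (2*(n:ℝ) + 4) / d3 n)
        ≤ Γk * ((x ^ ((3:ℝ)-k) / Real.Gamma a1) * (4/3))
          + Γk * ((x ^ ((4:ℝ)) / Real.Gamma a3) * (4/3)) := by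
          gcongr
      _ ≤ Γk * ((x ^ ((3:ℝ)-k) / Real.Gamma a1) * (4/3))
          + Γk * ((x ^ ((3:ℝ)-k) / Real.Gamma a3) * (4/3)) := by
          gcongr
      _ = C * x ^ ((3:ℝ)-k) := by rw [hC]; ring
      _ ≤ C * u ^ ((3:ℝ)-k) := by gcongr
  -- assemble: big-O of u^(3-k), which is little-o of u^2
  have hO : (fun u : ℝ => theta k u
        - (Γk / ((2:ℝ)^(1-k) * Real.Gamma ((3-k)/2))) * u ^ (1-k)
        + u ^ 2 / (2 * (k + 1)))
      =O[nhdsWithin 0 (Set.Ioi 0)] (fun u : ℝ => u ^ ((3:ℝ)-k)) := by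
    rw [Asymptotics.isBigO_iff]
    refine ⟨C, ?_⟩
    filter_upwards [Ioo_mem_nhdsGT_of_mem (by norm_num : (0:ℝ) ∈ Set.Ico 0 1)] with u hu
    have h := hbound u hu
    rw [Real.norm_eq_abs, Real.norm_eq_abs, abs_of_nonneg (Real.rpow_nonneg hu.1.le _)]
    exact h
  have ho : (fun u : ℝ => u ^ ((3:ℝ)-k)) =o[nhdsWithin 0 (Set.Ioi 0)]
      (fun u : ℝ => u ^ 2) := by
    have ht : Tendsto (fun u : ℝ => u ^ ((1:ℝ)-k)) (nhdsWithin 0 (Set.Ioi 0)) (nhds 0) := by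
      have hc : ContinuousAt (fun u : ℝ => u ^ ((1:ℝ)-k)) 0 :=
        Real.continuousAt_rpow_const 0 (1-k) (Or.inr (by linarith))
      have h := hc.tendsto
      rw [Real.zero_rpow (by intro h'; linarith [h'] : (1:ℝ)-k ≠ 0)] at h
      exact h.mono_left nhdsWithin_le_nhds
    have h1 : (fun u : ℝ => u ^ ((1:ℝ)-k)) =o[nhdsWithin 0 (Set.Ioi 0)]
        (fun _ => (1:ℝ)) := (Asymptotics.isLittleO_one_iff ℝ).2 ht
    have h2 := h1.mul_isBigO
      (Asymptotics.isBigO_refl (fun u : ℝ => u ^ 2) (nhdsWithin 0 (Set.Ioi 0)))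
    refine h2.congr' ?_ ?_
    · filter_upwards [self_mem_nhdsWithin] with u hu
      have hu0 : (0:ℝ) < u := hu
      rw [show (u:ℝ)^2 = u ^ ((2:ℝ)) by rw [show ((2:ℝ)) = ((2:ℕ):ℝ) by norm_num, Real.rpow_natCast],
        ← Real.rpow_add hu0]
      congr 1
      ring
    · filter_upwards with u
      simp
  exact hO.trans_isLittleO ho
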